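/- Let Γ ⊆ ℤ³ be a cubic sublattice with edge length d (i.e., Γ is generated by three pairwise orthogonal integer vectors each of length d). Then for any a, b ∈ Γ, the cross product a × b is divisible by d in ℤ³, and (a × b)/d ∈ Γ. -/

import Mathlib

/-- Dot product on `ℤ³`. -/
def dot3 (a b : Fin 3 → ℤ) : ℤ := a 0 * b 0 + a 1 * b 1 + a 2 * b 2

/-- Cross product on `ℤ³`. -/
def cross3 (a b : Fin 3 → ℤ) : Fin 3 → ℤ :=
  ![a 1 * b 2 - a 2 * b 1, a 2 * b 0 - a 0 * b 2, a 0 * b 1 - a 1 * b 0]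

/-- A vector of `ℤ³` is primitive if its coordinates are coprime. -/
def Primitive (v : Fin 3 → ℤ) : Prop := Int.gcd (Int.gcd (v 0) (v 1)) (v 2) = 1

/-- A cubic sublattice of `ℤ³` with edge length `d`: a subgroup generated by three
pairwise orthogonal vectors of length `d`. -/
def IsCubicLattice (Γ : AddSubgroup (Fin 3 → ℤ)) (d : ℕ) : Prop :=
  ∃ a b c : Fin 3 → ℤ,
    Γ = AddSubgroup.closure {a, b, c} ∧
    dot3 a b = 0 ∧ dot3 a c = 0 ∧ dot3 b c = 0 ∧
    dot3 a a = (d : ℤ)^2 ∧ dot3 b b = (d : ℤ)^2 ∧ dot3 c c = (d : ℤ)^2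

/-! The cross product is bilinear, so it suffices to treat pairs of generators `u, v, w` of `Γ`.
Orthogonality gives `w × (u × v) = (w·v) u - (w·u) v = 0`, so expanding `w × (w × (u × v)) = 0`
yields `d² (u × v) = t w` with `t = w · (u × v)`. Dotting with `u × v` and Lagrange's identity
`|u × v|² = d⁴` give `t² = d⁶`, hence `t = ±d³` and `u × v = ±d w`. -/

open Matrix

lemma cross3_eq_crossProduct (a b : Fin 3 → ℤ) : cross3 a b = a ⨯₃ b := rfl

lemma dot3_eq_dotProduct (a b : Fin 3 → ℤ) : dot3 a b = a ⬝ᵥ b := (vec3_dotProduct a b).symm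

lemma LinearMap.apply_mem_of_mem_closure {M N P : Type*} [AddCommGroup M] [AddCommGroup N]
    [AddCommGroup P] (f : M →ₗ[ℤ] N →ₗ[ℤ] P) {s : Set M} {t : Set N} {H : AddSubgroup P}
    (hst : ∀ x ∈ s, ∀ y ∈ t, f x y ∈ H) {a : M} {b : N}
    (ha : a ∈ AddSubgroup.closure s) (hb : b ∈ AddSubgroup.closure t) : f a b ∈ H := by
  rw [← Submodule.span_int_eq_addSubgroupClosure] at ha hb
  have hab := Submodule.apply_mem_map₂ f ha hb
  rw [Submodule.map₂_span_span] at hab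
  exact (Submodule.span_le (p := H.toIntSubmodule)).mpr (Set.image2_subset_iff.mpr hst) hab

theorem cross_eq_smul_or_eq_smul_neg_of_orthogonal {R : Type*} [CommRing R] [IsDomain R]
    {d : R} (hd : d ≠ 0) {u v w : Fin 3 → R}
    (huv : u ⬝ᵥ v = 0) (huw : u ⬝ᵥ w = 0) (hvw : v ⬝ᵥ w = 0)
    (huu : u ⬝ᵥ u = d ^ 2) (hvv : v ⬝ᵥ v = d ^ 2) (hww : w ⬝ᵥ w = d ^ 2) :
    u ⨯₃ v = d • w ∨ u ⨯₃ v = d • -w := by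
  set x := u ⨯₃ v
  have hwx : w ⨯₃ x = 0 := by
    rw [cross_cross_eq_smul_sub_smul', dotProduct_comm w v, hvw, huw, zero_smul, zero_smul,
      sub_zero]
  have hx : d ^ 2 • x = (w ⬝ᵥ x) • w := by
    have h := cross_cross_eq_smul_sub_smul' w w x
    rw [hwx, map_zero, hww] at h
    exact (sub_eq_zero.mp h.symm).symm
  have hxx : x ⬝ᵥ x = d ^ 4 := by
    rw [cross_dot_cross, huu, hvv, huv]; ring
  have ht : (w ⬝ᵥ x) ^ 2 = (d ^ 3) ^ 2 := by
    have h := congrArg (· ⬝ᵥ x) hx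
    simp only [smul_dotProduct, smul_eq_mul, hxx] at h
    linear_combination -h
  have hcancel := smul_right_injective (Fin 3 → R) (pow_ne_zero 2 hd)
  rcases sq_eq_sq_iff_eq_or_eq_neg.mp ht with ht | ht
  · left
    exact hcancel (by simp only [hx, ht, smul_smul]; ring_nf)
  · right
    exact hcancel (by simp only [hx, ht, smul_smul, smul_neg, neg_smul]; ring_nf)

theorem cross_mem_map_zsmul_closure_of_orthogonal {d : ℤ} (hd : d ≠ 0) {u v w : Fin 3 → ℤ}
    (huv : u ⬝ᵥ v = 0) (huw : u ⬝ᵥ w = 0) (hvw : v ⬝ᵥ w = 0)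
    (huu : u ⬝ᵥ u = d ^ 2) (hvv : v ⬝ᵥ v = d ^ 2) (hww : w ⬝ᵥ w = d ^ 2) :
    ∀ x ∈ ({u, v, w} : Set (Fin 3 → ℤ)), ∀ y ∈ ({u, v, w} : Set (Fin 3 → ℤ)),
      x ⨯₃ y ∈ (AddSubgroup.closure {u, v, w}).map (zsmulAddGroupHom d) := by
  set Γ := AddSubgroup.closure ({u, v, w} : Set (Fin 3 → ℤ))
  have mem_of_eq {x y z : Fin 3 → ℤ} (hz : z ∈ Γ) (h : x ⨯₃ y = d • z ∨ x ⨯₃ y = d • -z) :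
      x ⨯₃ y ∈ Γ.map (zsmulAddGroupHom d) := by
    rcases h with h | h
    · exact ⟨z, hz, h.symm⟩
    · exact ⟨-z, neg_mem hz, h.symm⟩
  have mem_swap {x y : Fin 3 → ℤ} (h : x ⨯₃ y ∈ Γ.map (zsmulAddGroupHom d)) :
      y ⨯₃ x ∈ Γ.map (zsmulAddGroupHom d) := by
    rw [← cross_anticomm]
    exact neg_mem h
  have huv' := mem_of_eq (AddSubgroup.subset_closure (by simp))
    (cross_eq_smul_or_eq_smul_neg_of_orthogonal hd huv huw hvw huu hvv hww)
  have hvw' := mem_of_eq (AddSubgroup.subset_closure (by simp))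
    (cross_eq_smul_or_eq_smul_neg_of_orthogonal hd hvw (by rwa [dotProduct_comm])
      (by rwa [dotProduct_comm]) hvv hww huu)
  have hwu' := mem_of_eq (AddSubgroup.subset_closure (by simp))
    (cross_eq_smul_or_eq_smul_neg_of_orthogonal hd (by rwa [dotProduct_comm])
      (by rwa [dotProduct_comm]) huv hww huu hvv)
  rintro x (rfl | rfl | rfl) y (rfl | rfl | rfl)
  all_goals first
    | rw [cross_self]; exact zero_mem _
    | assumption
    | exact mem_swap ‹_›

/-- In a cubic sublattice of edge length `d`, the cross product of two lattice
vectors is divisible by `d`, and the quotient again lies in the sublattice. -/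
theorem cross_div_edge_mem (Γ : AddSubgroup (Fin 3 → ℤ)) (d : ℕ) (hd : 0 < d)
    (hΓ : IsCubicLattice Γ d) (a b : Fin 3 → ℤ) (ha : a ∈ Γ) (hb : b ∈ Γ) :
    ∃ w ∈ Γ, (d : ℤ) • w = cross3 a b := by
  obtain ⟨u, v, w, rfl, huv, huw, hvw, huu, hvv, hww⟩ := hΓ
  simp only [dot3_eq_dotProduct] at huv huw hvw huu hvv hww
  have hgen := cross_mem_map_zsmul_closure_of_orthogonal (by exact_mod_cast hd.ne') huv huw hvw
    huu hvv hww
  rw [cross3_eq_crossProduct]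
  exact AddSubgroup.mem_map.mp (crossProduct.apply_mem_of_mem_closure hgen ha hb)
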